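/- There is a constant c > 0 depending only on n such that the following holds. Let q be a prime power, n ≥ 1, and 0 ≤ k ≤ m ≤ n. Then the number of pairs (A, C) ∈ M_n(𝔽_q) × M_n(𝔽_q) with rank(A) = m, rank(C) = k, and such that the matrix equation A·X = C has a solution X ∈ M_n(𝔽_q), is at most c · q^{2mn + nk + mk − m² − k²}. -/

import Mathlib

/-!
A matrix `M` of rank `r` factors as `M = U * (L * M)` with `L * U = 1`, where `U` has `r`
columns. If `A` has rank `m` and `A * X = C`, then `C = U * (L * C)`, so `C ↦ L * C` embeds the
admissible `C` into the `m × n` matrices of rank `k`: the count is at most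
`#{rank m, n × n} * #{rank k, m × n}`. For an `a × b` matrix `M` of rank `r`, the pairs
`(U * G, G⁻¹ * (L * M))` with `G ∈ GL_r` are pairwise distinct, so
`#{rank r, a × b} * |GL_r| ≤ q ^ (r * (a + b))`, and `|GL_r| ≥ q ^ (r * r) / 2 ^ r` because
every factor `q ^ r - q ^ i` of `|GL_r|` is at least `q ^ r / 2`.
-/

theorem Nat.card_matrix (m n α : Type*) [Fintype m] [Fintype n] [Fintype α] :
    Nat.card (Matrix m n α) = Fintype.card α ^ (Fintype.card m * Fintype.card n) := by
  show Nat.card (m → n → α) = _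
  simp [Nat.card_fun, ← pow_mul, mul_comm]

namespace Matrix

variable {F : Type*} [Field F]

theorem exists_rank_factorization {m n : Type*} [Fintype m] [DecidableEq m] [Fintype n]
    {r : ℕ} (M : Matrix m n F) (hM : M.rank = r) :
    ∃ (U : Matrix m (Fin r) F) (L : Matrix (Fin r) m F), L * U = 1 ∧ U * (L * M) = M := by
  set R := LinearMap.range M.mulVecLin
  let e : R ≃ₗ[F] (Fin r → F) := (Module.finBasisOfFinrankEq F R hM).equivFun
  let ι : (Fin r → F) →ₗ[F] (m → F) := R.subtype ∘ₗ e.symm.toLinearMap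
  obtain ⟨g, hg⟩ := ι.exists_leftInverse_of_injective
    (LinearMap.ker_eq_bot.mpr (R.subtype_injective.comp e.symm.injective))
  refine ⟨LinearMap.toMatrix' ι, LinearMap.toMatrix' g, ?_, ?_⟩
  · rw [← LinearMap.toMatrix'_comp, hg, LinearMap.toMatrix'_id]
  · classical
    apply Matrix.toLin'.injective
    refine LinearMap.ext fun x => ?_
    obtain ⟨y, hy⟩ : ∃ y, ι y = M *ᵥ x :=
      ⟨e ⟨_, M.mulVecLin.mem_range_self x⟩, by simp [ι]⟩
    rw [Matrix.toLin'_mul, Matrix.toLin'_mul]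
    simp only [LinearMap.comp_apply, Matrix.toLin'_apply, ← hy, LinearMap.toMatrix'_mulVec]
    rw [← LinearMap.comp_apply g ι, hg, LinearMap.id_apply]

theorem rank_mul_eq_right_of_mul_eq_one {l m n : Type*} [Fintype l] [Fintype m]
    [DecidableEq m] [Fintype n] {L : Matrix m l F} {U : Matrix l m F} (h : L * U = 1)
    (B : Matrix m n F) : (U * B).rank = B.rank := by
  refine le_antisymm (rank_mul_le_right U B) ?_
  calc B.rank = (L * (U * B)).rank := by rw [← Matrix.mul_assoc, h, Matrix.one_mul]
    _ ≤ (U * B).rank := rank_mul_le_right L (U * B)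

theorem pow_le_two_pow_mul_card_GL [Fintype F] (r : ℕ) :
    Fintype.card F ^ (r * r) ≤ 2 ^ r * Nat.card (GL (Fin r) F) := by
  set q := Fintype.card F
  have hq : 2 ≤ q := Fintype.one_lt_card
  have hfactor (i : Fin r) : q ^ r ≤ 2 * (q ^ r - q ^ (i : ℕ)) := by
    have : 2 * q ^ (i : ℕ) ≤ q ^ r :=
      calc 2 * q ^ (i : ℕ) ≤ q ^ ((i : ℕ) + 1) := by rw [pow_succ']; gcongr
        _ ≤ q ^ r := Nat.pow_le_pow_right (by omega) i.2
    omega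
  calc q ^ (r * r) = ∏ _i : Fin r, q ^ r := by simp [← pow_mul]
    _ ≤ ∏ i : Fin r, 2 * (q ^ r - q ^ (i : ℕ)) := Finset.prod_le_prod' fun i _ => hfactor i
    _ = 2 ^ r * Nat.card (GL (Fin r) F) := by
        rw [card_GL_field, Finset.prod_mul_distrib, Finset.prod_const, Finset.card_univ,
          Fintype.card_fin]

section Counting

variable [Fintype F] {m n : Type*} [Fintype m] [DecidableEq m] [Fintype n]

theorem ncard_rank_eq_mul_pow_le (r : ℕ) :
    {M : Matrix m n F | M.rank = r}.ncard * Fintype.card F ^ (r * r) ≤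
      2 ^ r * Fintype.card F ^ (r * (Fintype.card m + Fintype.card n)) := by
  set S := {M : Matrix m n F | M.rank = r}
  choose! U L hLU hULM using fun (M : Matrix m n F) (hM : M.rank = r) =>
    exists_rank_factorization M hM
  have hinj : (S ×ˢ (Set.univ : Set (GL (Fin r) F))).ncard ≤
      (Set.univ : Set (Matrix m (Fin r) F × Matrix (Fin r) n F)).ncard := by
    refine Set.ncard_le_ncard_of_injOn
      (fun p => (U p.1 * p.2.val, p.2⁻¹.val * (L p.1 * p.1))) (fun _ _ => Set.mem_univ _) ?_
    rintro ⟨M, G⟩ ⟨hM, -⟩ ⟨M', G'⟩ ⟨hM', -⟩ heq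
    obtain ⟨hU, hV⟩ := Prod.mk.inj heq
    have hprod (N : Matrix m n F) (hN : N.rank = r) (H : GL (Fin r) F) :
        U N * H.val * (H⁻¹.val * (L N * N)) = N := by
      rw [Matrix.mul_assoc, ← Matrix.mul_assoc H.val, ← Units.val_mul, mul_inv_cancel,
        Units.val_one, Matrix.one_mul, hULM N hN]
    obtain rfl : M = M' := by rw [← hprod M hM G, ← hprod M' hM' G', hU, hV]
    have hG : L M * (U M * G.val) = G.val := by
      rw [← Matrix.mul_assoc, hLU M hM, Matrix.one_mul]
    rw [Prod.mk.injEq, Units.ext_iff, ← hG, hU, ← Matrix.mul_assoc, hLU M hM, Matrix.one_mul]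
    exact ⟨rfl, rfl⟩
  rw [Set.ncard_prod, Set.ncard_univ, Set.ncard_univ, Nat.card_prod, Nat.card_matrix,
    Nat.card_matrix, Fintype.card_fin] at hinj
  calc S.ncard * Fintype.card F ^ (r * r) ≤ S.ncard * (2 ^ r * Nat.card (GL (Fin r) F)) :=
        Nat.mul_le_mul_left _ (pow_le_two_pow_mul_card_GL r)
    _ = 2 ^ r * (S.ncard * Nat.card (GL (Fin r) F)) := by ring
    _ ≤ 2 ^ r * Fintype.card F ^ (r * (Fintype.card m + Fintype.card n)) := by
        rw [mul_add, pow_add, mul_comm r (Fintype.card m)]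
        exact Nat.mul_le_mul_left _ hinj

theorem ncard_rank_eq_le_rpow (r : ℕ) :
    ({M : Matrix m n F | M.rank = r}.ncard : ℝ) ≤
      2 ^ r * (Fintype.card F : ℝ) ^
        ((r : ℝ) * (Fintype.card m + Fintype.card n) - (r : ℝ) ^ 2) := by
  set a := Fintype.card m
  set b := Fintype.card n
  have hq : (0 : ℝ) < Fintype.card F := by exact_mod_cast Fintype.card_pos
  rw [Real.rpow_sub hq, mul_div_assoc', le_div_iff₀ (by positivity),
    show (r : ℝ) ^ 2 = ((r * r : ℕ) : ℝ) by push_cast; ring,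
    show (r : ℝ) * (a + b) = ((r * (a + b) : ℕ) : ℝ) by push_cast; ring,
    Real.rpow_natCast, Real.rpow_natCast]
  exact_mod_cast ncard_rank_eq_mul_pow_le r

end Counting

theorem ncard_solvable_pairs_le {l n o : Type*} [Fintype l] [DecidableEq l] [Fintype n]
    [Fintype o] [Finite F] (m k : ℕ) :
    {p : Matrix l n F × Matrix l o F |
        p.1.rank = m ∧ p.2.rank = k ∧ ∃ X : Matrix n o F, p.1 * X = p.2}.ncard ≤
      {A : Matrix l n F | A.rank = m}.ncard * {Y : Matrix (Fin m) o F | Y.rank = k}.ncard := by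
  choose! U L hLU hULA using fun (A : Matrix l n F) (hA : A.rank = m) =>
    exists_rank_factorization A hA
  have hrecover : ∀ (A : Matrix l n F) (C : Matrix l o F),
      A.rank = m → (∃ X : Matrix n o F, A * X = C) → U A * (L A * C) = C := by
    rintro A _ hA ⟨X, rfl⟩
    rw [← Matrix.mul_assoc (L A) A X, ← Matrix.mul_assoc, hULA A hA]
  rw [← Set.ncard_prod]
  refine Set.ncard_le_ncard_of_injOn (fun p => (p.1, L p.1 * p.2)) ?_ ?_
  · rintro p ⟨hA, hC, hX⟩
    refine ⟨hA, ?_⟩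
    show (L p.1 * p.2).rank = k
    rw [← rank_mul_eq_right_of_mul_eq_one (hLU _ hA), hrecover _ _ hA hX, hC]
  · rintro p ⟨hA, -, hX⟩ p' ⟨-, -, hX'⟩ heq
    obtain ⟨hfst, hsnd⟩ := Prod.mk.inj heq
    refine Prod.ext hfst ?_
    rw [← hrecover _ _ hA hX, ← hrecover _ _ (hfst ▸ hA) hX', hsnd, hfst]

end Matrix

theorem count_solvable_pairs_general (n : ℕ) :
    ∃ c : ℝ, 0 < c ∧
      ∀ (F : Type) [Field F] [Fintype F],
        ∀ (k m : ℕ), k ≤ m → m ≤ n →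
          ({p : Matrix (Fin n) (Fin n) F × Matrix (Fin n) (Fin n) F |
              p.1.rank = m ∧ p.2.rank = k ∧
              ∃ X : Matrix (Fin n) (Fin n) F, p.1 * X = p.2}.ncard : ℝ) ≤
            c * (Fintype.card F : ℝ) ^
              (2 * (m : ℝ) * n + (n : ℝ) * k + (m : ℝ) * k - (m : ℝ) ^ 2 - (k : ℝ) ^ 2) := by
  refine ⟨4 ^ n, by positivity, fun F _ _ k m hkm hmn => ?_⟩
  have hq : (0 : ℝ) < Fintype.card F := by exact_mod_cast Fintype.card_pos
  have hA := Matrix.ncard_rank_eq_le_rpow (F := F) (m := Fin n) (n := Fin n) m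
  have hY := Matrix.ncard_rank_eq_le_rpow (F := F) (m := Fin m) (n := Fin n) k
  simp only [Fintype.card_fin] at hA hY
  have hpow : (2 : ℝ) ^ m * 2 ^ k ≤ 4 ^ n := by
    rw [← pow_add, show (4 : ℝ) = 2 ^ 2 by norm_num, ← pow_mul]
    exact pow_le_pow_right₀ one_le_two (by omega)
  calc _ ≤ ({A : Matrix (Fin n) (Fin n) F | A.rank = m}.ncard *
            {Y : Matrix (Fin m) (Fin n) F | Y.rank = k}.ncard : ℝ) := by
        exact_mod_cast Matrix.ncard_solvable_pairs_le m k
    _ ≤ _ := mul_le_mul hA hY (by positivity) (by positivity)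
    _ = 2 ^ m * 2 ^ k * (Fintype.card F : ℝ) ^
          (2 * (m : ℝ) * n + (n : ℝ) * k + (m : ℝ) * k - (m : ℝ) ^ 2 - (k : ℝ) ^ 2) := by
        rw [mul_mul_mul_comm, ← Real.rpow_add hq]
        ring_nf
    _ ≤ _ := by gcongr

/-- The number of pairs (A, C) with rank(A) = m, rank(C) = k and A·X = C solvable
is at most c · q^{2mn + nk + mk - m² - k²}. -/
theorem count_solvable_pairs (n : ℕ) (hn : 1 ≤ n) :
    ∃ c : ℝ, 0 < c ∧
      ∀ (F : Type) [Field F] [Fintype F],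
        ∀ (k m : ℕ), k ≤ m → m ≤ n →
          ({p : Matrix (Fin n) (Fin n) F × Matrix (Fin n) (Fin n) F |
              p.1.rank = m ∧ p.2.rank = k ∧
              ∃ X : Matrix (Fin n) (Fin n) F, p.1 * X = p.2}.ncard : ℝ) ≤
            c * (Fintype.card F : ℝ) ^
              (2 * (m : ℝ) * n + (n : ℝ) * k + (m : ℝ) * k - (m : ℝ) ^ 2 - (k : ℝ) ^ 2) :=
  count_solvable_pairs_general n
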